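/- Let Q(x,y) = αx² + βxy + γy² with β odd and a odd. Then for all e ≥ 1, R_a(2^e)/2^e = R_a(2)/2; moreover R_a(2) = 1 if 2 | αγ and R_a(2) = 3 if α, β, γ are all odd. -/

import Mathlib

/-!
For `q` even, reduction modulo `q` sends solutions of `Q ≡ a (mod 2q)` to solutions of
`Q ≡ a (mod q)`, and each solution `(x, y)` modulo `q` has the four lifts `(x + qs, y + qt)`,
`s, t ∈ {0, 1}`. Since `β` is odd and `2q ∣ q²`,
`Q(x + qs, y + qt) ≡ Q(x, y) + q(sy + tx) (mod 2q)`, and since `a` is odd, `x` or `y` is odd,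
so exactly two of the four lifts are solutions. Hence `R_a(2q) = 2 R_a(q)`, and `R_a(2)` is a
count of points of `(ℤ/2)²`.
-/

/-- `R_a(q)` counts `(x,y)` with `1 ≤ x,y ≤ q` and
`α x² + β x y + γ y² ≡ a (mod q)`. -/
def Rcount (α β γ a : ℤ) (q : ℕ) : ℕ :=
  ((Finset.Icc 1 q ×ˢ Finset.Icc 1 q).filter
    (fun xy => (α * (xy.1 : ℤ) ^ 2 + β * (xy.1 : ℤ) * (xy.2 : ℤ) + γ * (xy.2 : ℤ) ^ 2) % (q : ℤ)
      = a % (q : ℤ))).card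

open Finset

theorem bijOn_natCast_Icc (n : ℕ) [NeZero n] :
    Set.BijOn (Nat.cast : ℕ → ZMod n) (Set.Icc 1 n) Set.univ := by
  refine Set.InvOn.bijOn (f' := fun v => if v = 0 then n else v.val)
    ⟨fun x hx => ?_, fun v _ => ?_⟩ (Set.mapsTo_univ _ _) fun v _ => ?_
  · obtain ⟨hx1, hxn⟩ := hx
    rcases hxn.lt_or_eq with hlt | rfl
    · have hx0 : (x : ZMod n) ≠ 0 := by
        rw [Ne, ZMod.natCast_eq_zero_iff]
        exact Nat.not_dvd_of_pos_of_lt hx1 hlt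
      simp [hx0, ZMod.val_natCast, Nat.mod_eq_of_lt hlt]
    · simp
  · by_cases hv : v = 0 <;> simp [hv]
  · by_cases hv : v = 0
    · simp [hv, NeZero.one_le]
    · simp only [hv, if_false, Set.mem_Icc]
      exact ⟨Nat.one_le_iff_ne_zero.mpr ((ZMod.val_eq_zero v).not.mpr hv), (ZMod.val_lt v).le⟩

theorem card_filter_Icc_prod_natCast (n : ℕ) [NeZero n] (P : ZMod n × ZMod n → Prop)
    [DecidablePred P] :
    #{p ∈ Icc 1 n ×ˢ Icc 1 n | P ((p.1 : ZMod n), (p.2 : ZMod n))} =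
      #{v : ZMod n × ZMod n | P v} := by
  have hbij := (bijOn_natCast_Icc n).prodMap (bijOn_natCast_Icc n)
  refine card_nbij (Prod.map Nat.cast Nat.cast) (fun p hp => ?_) (fun p hp p' hp' h => ?_) ?_
  · simpa [Prod.map] using (mem_filter.mp hp).2
  · simp only [coe_filter, mem_product, mem_Icc, Set.mem_ofPred_eq] at hp hp'
    exact hbij.injOn ⟨hp.1.1, hp.1.2⟩ ⟨hp'.1.1, hp'.1.2⟩ h
  · intro v hv
    obtain ⟨p, hp, rfl⟩ :=
      hbij.surjOn (⟨Set.mem_univ _, Set.mem_univ _⟩ : v ∈ Set.univ ×ˢ Set.univ)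
    simp only [coe_filter, mem_univ, true_and, Set.mem_ofPred_eq] at hv
    exact ⟨p, mem_filter.mpr ⟨mem_product.mpr ⟨mem_Icc.mpr hp.1, mem_Icc.mpr hp.2⟩, hv⟩,
      rfl⟩

theorem sum_Icc_two_mul {M : Type*} [AddCommMonoid M] (q : ℕ) (f : ℕ → M) :
    ∑ x ∈ Icc 1 (2 * q), f x = ∑ r ∈ Icc 1 q, ∑ s : ZMod 2, f (r + q * s.val) := by
  have sum_zmod_two (g : ZMod 2 → M) : ∑ s, g s = g 0 + g 1 := Fin.sum_univ_two g
  have shift : ∑ r ∈ Icc 1 q, f (r + q) = ∑ x ∈ Icc (1 + q) (q + q), f x := by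
    rw [← map_add_right_Icc, sum_map]
    rfl
  simp only [sum_zmod_two, ZMod.val_zero, ZMod.val_one, mul_zero, add_zero, mul_one,
    sum_add_distrib, shift, two_mul, Nat.add_comm 1 q]
  have split := sum_Ioc_consecutive f (Nat.zero_le q) (Nat.le_add_right q q)
  simp only [← Icc_add_one_left_eq_Ioc, zero_add] at split
  exact split.symm

theorem card_filter_Icc_two_mul_prod (q : ℕ) (P : ℕ × ℕ → Prop) [DecidablePred P] :
    #{p ∈ Icc 1 (2 * q) ×ˢ Icc 1 (2 * q) | P p} =
      ∑ p ∈ Icc 1 q ×ˢ Icc 1 q,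
        #{st : ZMod 2 × ZMod 2 | P (p.1 + q * st.1.val, p.2 + q * st.2.val)} := by
  simp only [card_filter, sum_product, Fintype.sum_prod_type, sum_Icc_two_mul]
  exact sum_congr rfl fun r _ => sum_comm

theorem card_zmod_two_affine_eq_zero :
    ∀ K X Y : ZMod 2, (X ≠ 0 ∨ Y ≠ 0) →
      #{st : ZMod 2 × ZMod 2 | K + st.1 * Y + st.2 * X = 0} = 2 := by
  decide

theorem card_zmod_two_quadForm_eq_one :
    ∀ A C : ZMod 2, #{v : ZMod 2 × ZMod 2 | A * v.1 ^ 2 + v.1 * v.2 + C * v.2 ^ 2 = 1} =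
      if A * C = 0 then 1 else 3 := by
  decide

def quadForm (α β γ x y : ℤ) : ℤ := α * x ^ 2 + β * x * y + γ * y ^ 2

section Lifting

variable {α β γ a : ℤ}

theorem quadForm_add_mul_modEq (q : ℕ) (x y s t : ℤ) :
    quadForm α β γ (x + q * s) (y + q * t) ≡ quadForm α β γ x y [ZMOD q] := by
  rw [← ZMod.intCast_eq_intCast_iff]
  simp [quadForm]

theorem zmod_two_ne_zero_or_of_quadForm_modEq {q : ℕ} {x y : ℤ} (ha : Odd a) (hq : Even q)
    (h : quadForm α β γ x y ≡ a [ZMOD q]) : (x : ZMod 2) ≠ 0 ∨ (y : ZMod 2) ≠ 0 := by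
  have h2 : quadForm α β γ x y ≡ a [ZMOD (2 : ℕ)] := h.of_dvd (by exact_mod_cast hq.two_dvd)
  rw [← ZMod.intCast_eq_intCast_iff, ZMod.intCast_eq_one_iff_odd.mpr ha] at h2
  contrapose! h2
  simp [quadForm, h2.1, h2.2]

theorem quadForm_lift_modEq_iff {q : ℕ} {x y k : ℤ} (hβ : Odd β) (hq : Even q) (hq0 : q ≠ 0)
    (hk : quadForm α β γ x y - a = q * k) (s t : ℤ) :
    quadForm α β γ (x + q * s) (y + q * t) ≡ a [ZMOD 2 * q] ↔
      ((k + s * y + t * x : ℤ) : ZMod 2) = 0 := by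
  obtain ⟨b, rfl⟩ := hβ
  obtain ⟨r, rfl⟩ := hq
  have expand : a - quadForm α (2 * b + 1) γ (x + (r + r : ℕ) * s) (y + (r + r : ℕ) * t) =
      ((r + r : ℕ) * 2 : ℤ) * -(α * x * s + γ * y * t + b * (s * y + t * x)
        + r * quadForm α (2 * b + 1) γ s t) + ((r + r : ℕ) : ℤ) * -(k + s * y + t * x) := by
    simp only [quadForm] at hk ⊢
    push_cast at hk ⊢
    linear_combination -hk
  rw [Int.modEq_iff_dvd, expand, mul_comm 2, dvd_add_right (dvd_mul_right _ _),
    mul_dvd_mul_iff_left (by exact_mod_cast hq0), dvd_neg]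
  exact (ZMod.intCast_zmod_eq_zero_iff_dvd _ 2).symm

theorem card_lifts_quadForm_modEq {q : ℕ} (hβ : Odd β) (ha : Odd a) (hq : Even q)
    (hq0 : q ≠ 0) (x y : ℤ) :
    #{st : ZMod 2 × ZMod 2 |
        quadForm α β γ (x + q * st.1.val) (y + q * st.2.val) ≡ a [ZMOD 2 * q]} =
      if quadForm α β γ x y ≡ a [ZMOD q] then 2 else 0 := by
  split_ifs with h
  · obtain ⟨k, hk⟩ := Int.modEq_iff_dvd.mp h.symm
    rw [filter_congr fun st _ => quadForm_lift_modEq_iff hβ hq hq0 hk _ _]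
    push_cast [ZMod.natCast_val, ZMod.cast_id]
    exact card_zmod_two_affine_eq_zero _ _ _ (zmod_two_ne_zero_or_of_quadForm_modEq ha hq h)
  · refine card_eq_zero.mpr (filter_eq_empty_iff.mpr fun st _ hst => h ?_)
    exact (quadForm_add_mul_modEq q x y _ _).symm.trans (hst.of_dvd (by simp))

end Lifting

section Rcount

variable (α β γ a : ℤ)

theorem Rcount_eq_card_quadForm_modEq (q : ℕ) :
    Rcount α β γ a q =
      #{p ∈ Icc 1 q ×ˢ Icc 1 q | quadForm α β γ p.1 p.2 ≡ a [ZMOD q]} :=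
  rfl

theorem Rcount_eq_card_zmod (n : ℕ) [NeZero n] :
    Rcount α β γ a n =
      #{v : ZMod n × ZMod n | (α : ZMod n) * v.1 ^ 2 + β * v.1 * v.2 + γ * v.2 ^ 2 = a} := by
  rw [Rcount_eq_card_quadForm_modEq, ← card_filter_Icc_prod_natCast]
  congr! 2 with p
  rw [← ZMod.intCast_eq_intCast_iff]
  simp [quadForm]

theorem Rcount_two_mul (hβ : Odd β) (ha : Odd a) {q : ℕ} (hq : Even q) (hq0 : q ≠ 0) :
    Rcount α β γ a (2 * q) = 2 * Rcount α β γ a q := by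
  rw [Rcount_eq_card_quadForm_modEq, Rcount_eq_card_quadForm_modEq, card_filter_Icc_two_mul_prod]
  push_cast
  rw [sum_congr rfl fun p _ => card_lifts_quadForm_modEq hβ ha hq hq0 p.1 p.2, sum_ite,
    sum_const_zero, add_zero, sum_const, smul_eq_mul, mul_comm]

theorem Rcount_two_pow_succ (hβ : Odd β) (ha : Odd a) (e : ℕ) :
    Rcount α β γ a (2 ^ (e + 1)) = 2 ^ e * Rcount α β γ a 2 := by
  induction e with
  | zero => simp
  | succ e ih =>
    have hq : Even (2 ^ (e + 1)) := Nat.even_pow.mpr ⟨even_two, e.succ_ne_zero⟩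
    rw [pow_succ' 2 (e + 1), Rcount_two_mul α β γ a hβ ha hq (pow_ne_zero _ two_ne_zero), ih,
      pow_succ]
    ring

theorem Rcount_two (hβ : Odd β) (ha : Odd a) :
    Rcount α β γ a 2 = if 2 ∣ α * γ then 1 else 3 := by
  have hdvd : 2 ∣ α * γ ↔ (α : ZMod 2) * γ = 0 := by
    rw [← Int.cast_mul, ZMod.intCast_zmod_eq_zero_iff_dvd, Nat.cast_ofNat]
  rw [Rcount_eq_card_zmod, ZMod.intCast_eq_one_iff_odd.mpr hβ, ZMod.intCast_eq_one_iff_odd.mpr ha]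
  simp only [one_mul, hdvd]
  exact card_zmod_two_quadForm_eq_one _ _

end Rcount

/-- For `β` odd and `a` odd: `R_a(2^e)/2^e = R_a(2)/2` for every `e ≥ 1`; moreover
`R_a(2) = 1` if `2 ∣ αγ`, and `R_a(2) = 3` if `α, β, γ` are all odd. -/
theorem stmt12 (α β γ a : ℤ) (hβ : Odd β) (ha : Odd a) :
    (∀ e : ℕ, 1 ≤ e →
      (Rcount α β γ a (2 ^ e) : ℝ) / (2 : ℝ) ^ e = (Rcount α β γ a 2 : ℝ) / 2) ∧
    (2 ∣ α * γ → Rcount α β γ a 2 = 1) ∧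
    (Odd α ∧ Odd γ → Rcount α β γ a 2 = 3) := by
  refine ⟨fun e he => ?_, fun h => ?_, fun ⟨hα, hγ⟩ => ?_⟩
  · obtain ⟨e, rfl⟩ := Nat.exists_eq_add_of_le' he
    rw [Rcount_two_pow_succ α β γ a hβ ha, pow_succ]
    push_cast
    field_simp
  · rw [Rcount_two α β γ a hβ ha, if_pos h]
  · have hndvd : ¬ 2 ∣ α * γ := fun h =>
      Int.not_even_iff_odd.mpr (hα.mul hγ) (even_iff_two_dvd.mpr h)
    rw [Rcount_two α β γ a hβ ha, if_neg hndvd]
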